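/- Under the hypotheses guaranteeing f^α ∈ dom(E) (in particular ‖α‖_∞ ≤ 1/√(3·5ⁿ)), the α-fractal operator F^α : dom(E) → dom(E), f ↦ f^α, is bounded with respect to the energy seminorm ‖u‖_E = √(E(u)), with ‖F^α‖_E ≤ √((3 + 3·5ⁿ‖α‖²‖T‖)/(1 − 3·5ⁿ‖α‖²)). -/

import Mathlib

noncomputable section

open Metric Set Filter Topology

/-- The plane with the Euclidean norm. -/
abbrev E2 := EuclideanSpace ℝ (Fin 2)

/-- The contraction `L_i(x) = (x - q_i)/2 + q_i` towards the vertex `q i`. -/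
def Lmap (q : Fin 3 → E2) (i : Fin 3) (x : E2) : E2 := midpoint ℝ x (q i)

/-- Composite map `L_ω = L_{w₁} ∘ ⋯ ∘ L_{wₙ}` for a word `ω`. -/
def Lw (q : Fin 3 → E2) : List (Fin 3) → E2 → E2
  | [] => id
  | i :: w => Lmap q i ∘ Lw q w

/-- The three vertices of the cell indexed by the word `w`. -/
def cellVerts (q : Fin 3 → E2) (w : List (Fin 3)) : Set E2 :=
  Lw q w '' {q 0, q 1, q 2}

/-- `x ∼ₘ y` : `x` and `y` are vertices of a common level-`m` cell. -/
def SameCell (q : Fin 3 → E2) (m : ℕ) (x y : E2) : Prop :=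
  ∃ w : List (Fin 3), w.length = m ∧ x ∈ cellVerts q w ∧ y ∈ cellVerts q w

/-- The Sierpiński gasket: closure of the set of all vertices of all cells. -/
def gasket (q : Fin 3 → E2) : Set E2 :=
  closure (⋃ w : List (Fin 3), cellVerts q w)

/-- `q₁, q₂, q₃` are equidistant points. -/
def Equidistant (q : Fin 3 → E2) : Prop :=
  ∀ i j, i ≠ j → dist (q i) (q j) = 1

/-- A function is harmonic iff its vertex values satisfy the "1/5-2/5" rule on
every cell: `h(q_{ωij}) = (2/5) h(q_{ωi}) + (2/5) h(q_{ωj}) + (1/5) h(q_{ωk})`. -/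
def Harmonic (q : Fin 3 → E2) (h : E2 → ℝ) : Prop :=
  ∀ w : List (Fin 3), ∀ i j k : Fin 3, i ≠ j → j ≠ k → i ≠ k →
    h (Lw q w (midpoint ℝ (q i) (q j))) =
      2/5 * h (Lw q w (q i)) + 2/5 * h (Lw q w (q j)) + 1/5 * h (Lw q w (q k))

/-- The `m`-th level renormalized energy
`E^{(m)}(u) = (5/3)^m ∑_{x ∼ₘ y} |u(x) - u(y)|²`, the inner sum ranging over the
three edges of each of the `3^m` level-`m` cells. -/
noncomputable def energyM (q : Fin 3 → E2) (u : E2 → ℝ) (m : ℕ) : ℝ :=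
  (5/3 : ℝ) ^ m * ∑ w : Fin m → Fin 3,
    ∑ p ∈ ({((0 : Fin 3), (1 : Fin 3)), (0, 2), (1, 2)} : Finset (Fin 3 × Fin 3)),
      (u (Lw q (List.ofFn w) (q p.1)) - u (Lw q (List.ofFn w) (q p.2))) ^ 2

/-!
The discrete energies are self-similar, `E_{n+k}(u) = (5/3)ⁿ ∑_{|ω|=n} E_k(u ∘ L_ω)`. On every
level-`n` cell `f^α ∘ L_ω = f ∘ L_ω + α_ω (f^α - Tf)`, so `(x + y + z)² ≤ 3(x² + y² + z²)` gives
`E_{n+k}(f^α) ≤ 3 E_{n+k}(f) + 3·5ⁿ‖α‖² (E_k(f^α) + E_k(Tf))`. Letting `k → ∞` and using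
`E(Tf) ≤ ‖T‖ E(f)`, the inequality can be solved for `E(f^α)` because `3·5ⁿ‖α‖² < 1`.
-/

lemma Lw_append (q : Fin 3 → E2) (v w : List (Fin 3)) (x : E2) :
    Lw q (v ++ w) x = Lw q v (Lw q w x) := by
  induction v with
  | nil => rfl
  | cons i v ih => simp [Lw, ih]

lemma Lw_mem_gasket (q : Fin 3 → E2) (w : List (Fin 3)) (i : Fin 3) :
    Lw q w (q i) ∈ gasket q := by
  refine subset_closure (mem_iUnion.2 ⟨w, q i, ?_, rfl⟩)
  fin_cases i <;> simp

lemma energyM_nonneg (q : Fin 3 → E2) (u : E2 → ℝ) (m : ℕ) : 0 ≤ energyM q u m :=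
  mul_nonneg (by positivity) <|
    Finset.sum_nonneg fun _ _ => Finset.sum_nonneg fun _ _ => sq_nonneg _

lemma energyM_congr_of_eqOn_gasket (q : Fin 3 → E2) {u v : E2 → ℝ} (h : EqOn u v (gasket q))
    (m : ℕ) : energyM q u m = energyM q v m := by
  unfold energyM
  congr 1
  refine Finset.sum_congr rfl fun w _ => Finset.sum_congr rfl fun p _ => ?_
  rw [h (Lw_mem_gasket q _ p.1), h (Lw_mem_gasket q _ p.2)]

lemma energyM_add (q : Fin 3 → E2) (u : E2 → ℝ) (n k : ℕ) :
    energyM q u (n + k) =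
      (5/3 : ℝ) ^ n * ∑ ω : Fin n → Fin 3, energyM q (u ∘ Lw q (List.ofFn ω)) k := by
  simp only [energyM, Finset.mul_sum, pow_add, mul_assoc]
  rw [← Equiv.sum_comp (Fin.appendEquiv n k), Fintype.sum_prod_type]
  simp [Fin.appendEquiv, Lw_append]

lemma sq_add_mul_sub_le (x y z a : ℝ) :
    (x + a * (y - z)) ^ 2 ≤ 3 * x ^ 2 + 3 * a ^ 2 * (y ^ 2 + z ^ 2) := by
  nlinarith [sq_nonneg (x - a * y), sq_nonneg (x + a * z), sq_nonneg (a * y + a * z)]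

lemma energyM_add_mul_sub_le (q : Fin 3 → E2) (u v w : E2 → ℝ) (a : ℝ) (m : ℕ) :
    energyM q (fun x => u x + a * (v x - w x)) m ≤
      3 * energyM q u m + 3 * a ^ 2 * (energyM q v m + energyM q w m) := by
  calc energyM q (fun x => u x + a * (v x - w x)) m
      ≤ (5/3 : ℝ) ^ m * ∑ c : Fin m → Fin 3,
          ∑ p ∈ ({((0 : Fin 3), (1 : Fin 3)), (0, 2), (1, 2)} : Finset (Fin 3 × Fin 3)),
            (3 * (u (Lw q (List.ofFn c) (q p.1)) - u (Lw q (List.ofFn c) (q p.2))) ^ 2 +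
              3 * a ^ 2 * ((v (Lw q (List.ofFn c) (q p.1)) - v (Lw q (List.ofFn c) (q p.2))) ^ 2 +
                (w (Lw q (List.ofFn c) (q p.1)) - w (Lw q (List.ofFn c) (q p.2))) ^ 2)) := by
        unfold energyM
        gcongr with c _ p _
        generalize Lw q (List.ofFn c) (q p.1) = x₁, Lw q (List.ofFn c) (q p.2) = x₂
        linarith [sq_add_mul_sub_le (u x₁ - u x₂) (v x₁ - v x₂) (w x₁ - w x₂) a]
    _ = _ := by
        simp only [energyM, mul_add, Finset.sum_add_distrib, Finset.mul_sum]
        ring_nf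

lemma sum_sq_le_card_mul_sq {ι : Type*} [Fintype ι] {x : ι → ℝ} {b : ℝ} (hx : ∀ i, |x i| ≤ b) :
    ∑ i, x i ^ 2 ≤ Fintype.card ι * b ^ 2 := by
  calc ∑ i, x i ^ 2 ≤ ∑ _i : ι, b ^ 2 :=
        Finset.sum_le_sum fun i _ => sq_le_sq' (abs_le.1 (hx i)).1 (abs_le.1 (hx i)).2
    _ = Fintype.card ι * b ^ 2 := by simp

lemma energyM_add_le_of_selfAffine (q : Fin 3 → E2) {n : ℕ} {α : (Fin n → Fin 3) → ℝ} {A : ℝ}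
    {f Tf fα : E2 → ℝ} (hα : ∀ ω, |α ω| ≤ A)
    (hself : ∀ ω : Fin n → Fin 3, ∀ x ∈ gasket q,
      fα (Lw q (List.ofFn ω) x) = f (Lw q (List.ofFn ω) x) + α ω * (fα x - Tf x))
    (k : ℕ) :
    energyM q fα (n + k) ≤
      3 * energyM q f (n + k) + 3 * 5 ^ n * A ^ 2 * (energyM q fα k + energyM q Tf k) := by
  set S := energyM q fα k + energyM q Tf k
  have hS : 0 ≤ S := add_nonneg (energyM_nonneg q fα k) (energyM_nonneg q Tf k)
  have hcell : ∀ ω, energyM q (fα ∘ Lw q (List.ofFn ω)) k ≤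
      3 * energyM q (f ∘ Lw q (List.ofFn ω)) k + 3 * α ω ^ 2 * S := fun ω => by
    rw [energyM_congr_of_eqOn_gasket q (u := fα ∘ _) (hself ω)]
    exact energyM_add_mul_sub_le q _ fα Tf (α ω) k
  have hα2 : ∑ ω, α ω ^ 2 ≤ 3 ^ n * A ^ 2 := by simpa using sum_sq_le_card_mul_sq hα
  have h5 : (5/3 : ℝ) ^ n * 3 ^ n = 5 ^ n := by rw [← mul_pow]; norm_num
  calc energyM q fα (n + k)
      = (5/3 : ℝ) ^ n * ∑ ω, energyM q (fα ∘ Lw q (List.ofFn ω)) k := energyM_add q fα n k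
    _ ≤ (5/3 : ℝ) ^ n * ∑ ω, (3 * energyM q (f ∘ Lw q (List.ofFn ω)) k + 3 * α ω ^ 2 * S) := by
        gcongr with ω; exact hcell ω
    _ = 3 * energyM q f (n + k) + 3 * (5/3 : ℝ) ^ n * (∑ ω, α ω ^ 2) * S := by
        rw [energyM_add q f, Finset.sum_add_distrib, ← Finset.mul_sum, ← Finset.sum_mul,
          ← Finset.mul_sum]
        ring
    _ ≤ 3 * energyM q f (n + k) + 3 * (5/3 : ℝ) ^ n * (3 ^ n * A ^ 2) * S := by gcongr
    _ = 3 * energyM q f (n + k) + 3 * 5 ^ n * A ^ 2 * S := by linear_combination 3 * A ^ 2 * S * h5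

lemma mul_sq_lt_one_of_lt_one_div_sqrt {c A : ℝ} (hc : 0 < c) (hA0 : 0 ≤ A) (hA : A < 1 / √c) :
    c * A ^ 2 < 1 := by
  have h : A * √c < 1 := (lt_div_iff₀ (Real.sqrt_pos.2 hc)).1 hA
  calc c * A ^ 2 = (A * √c) ^ 2 := by rw [mul_pow, Real.sq_sqrt hc.le, mul_comm]
    _ < 1 := pow_lt_one₀ (by positivity) h two_ne_zero

lemma sqrt_le_sqrt_div_mul_sqrt_of_le_add_mul {B T e e' eT : ℝ} (hB0 : 0 ≤ B) (hB1 : B < 1)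
    (he : 0 ≤ e) (heT : eT ≤ T * e) (h : e' ≤ 3 * e + B * (e' + eT)) :
    √e' ≤ √((3 + B * T) / (1 - B)) * √e := by
  rw [← Real.sqrt_mul' _ he]
  refine Real.sqrt_le_sqrt ?_
  rw [div_mul_eq_mul_div, le_div_iff₀ (sub_pos.2 hB1)]
  nlinarith [mul_le_mul_of_nonneg_left heT hB0]

theorem alpha_fractal_operator_bounded_general (q : Fin 3 → E2)
    (n : ℕ) (α : (Fin n → Fin 3) → ℝ) (f Tf fα : E2 → ℝ)
    (Tnorm : ℝ)
    (A : ℝ)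
    (hA : A = Finset.univ.sup' Finset.univ_nonempty (fun ω : Fin n → Fin 3 => |α ω|))
    (hAlt : A < 1 / Real.sqrt (3 * 5 ^ n))
    (hself : ∀ ω : Fin n → Fin 3, ∀ x ∈ gasket q,
      fα (Lw q (List.ofFn ω) x) = f (Lw q (List.ofFn ω) x) + α ω * (fα x - Tf x))
    (Ef ETf Efα : ℝ)
    (hEf : Tendsto (energyM q f) atTop (𝓝 Ef))
    (hETf : Tendsto (energyM q Tf) atTop (𝓝 ETf))
    (hTbound : ETf ≤ Tnorm * Ef)
    (hEfα : Tendsto (energyM q fα) atTop (𝓝 Efα)) :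
    Real.sqrt Efα ≤
      Real.sqrt ((3 + 3 * 5 ^ n * A ^ 2 * Tnorm) / (1 - 3 * 5 ^ n * A ^ 2)) *
        Real.sqrt Ef := by
  have hαA : ∀ ω, |α ω| ≤ A := fun ω => hA ▸ Finset.le_sup' (fun ω => |α ω|) (Finset.mem_univ ω)
  have hA0 : 0 ≤ A := (abs_nonneg _).trans (hαA fun _ => 0)
  have hB1 : 3 * 5 ^ n * A ^ 2 < 1 := mul_sq_lt_one_of_lt_one_div_sqrt (by positivity) hA0 hAlt
  have hshift : Tendsto (n + ·) atTop atTop := tendsto_atTop_mono (Nat.le_add_left · n) tendsto_id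
  have hlimit : Efα ≤ 3 * Ef + 3 * 5 ^ n * A ^ 2 * (Efα + ETf) :=
    le_of_tendsto_of_tendsto' (hEfα.comp hshift)
      (((hEf.comp hshift).const_mul 3).add ((hEfα.add hETf).const_mul _))
      (energyM_add_le_of_selfAffine q hαA hself)
  exact sqrt_le_sqrt_div_mul_sqrt_of_le_add_mul (by positivity) hB1
    (ge_of_tendsto' hEf (energyM_nonneg q f)) hTbound hlimit

/-- Under the hypotheses guaranteeing `f^α ∈ dom(E)` (in particular
`‖α‖_∞ < 1/√(3·5ⁿ)`), the α-fractal operator `F^α : dom(E) → dom(E)`, `f ↦ f^α`, is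
bounded with respect to the energy seminorm `‖u‖_E = √(E(u))`:
`‖f^α‖_E ≤ √((3 + 3·5ⁿ ‖α‖² ‖T‖)/(1 - 3·5ⁿ ‖α‖²)) ‖f‖_E`. -/
theorem alpha_fractal_operator_bounded (q : Fin 3 → E2) (hq : Equidistant q)
    (n : ℕ) (α : (Fin n → Fin 3) → ℝ) (f Tf fα : E2 → ℝ)
    (Tnorm : ℝ) (hTnorm : 0 ≤ Tnorm)
    (A : ℝ)
    (hA : A = Finset.univ.sup' Finset.univ_nonempty (fun ω : Fin n → Fin 3 => |α ω|))
    (hAlt : A < 1 / Real.sqrt (3 * 5 ^ n))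
    (hT : Tf (q 0) = f (q 0) ∧ Tf (q 1) = f (q 1) ∧ Tf (q 2) = f (q 2))
    (hself : ∀ ω : Fin n → Fin 3, ∀ x ∈ gasket q,
      fα (Lw q (List.ofFn ω) x) = f (Lw q (List.ofFn ω) x) + α ω * (fα x - Tf x))
    (hfαcont : Continuous fα)
    (Ef ETf Efα : ℝ)
    (hEf : Tendsto (energyM q f) atTop (𝓝 Ef))
    (hETf : Tendsto (energyM q Tf) atTop (𝓝 ETf))
    (hTbound : ETf ≤ Tnorm * Ef)
    (hEfα : Tendsto (energyM q fα) atTop (𝓝 Efα)) :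
    Real.sqrt Efα ≤
      Real.sqrt ((3 + 3 * 5 ^ n * A ^ 2 * Tnorm) / (1 - 3 * 5 ^ n * A ^ 2)) *
        Real.sqrt Ef :=
  alpha_fractal_operator_bounded_general q n α f Tf fα Tnorm A hA hAlt hself Ef ETf Efα hEf hETf
    hTbound hEfα
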